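/- arXiv:2306.10880 — 5 statements merged into one kernel-verified Lean document; each statement's English description precedes it below -/
import Mathlib

section
/- For any feature i, coalition set S, model f and sample x, the conditional Shapley contribution decomposes as φ_{i,S}(f,x) = φ_{i,S,int}(f,x) + φ_{i,S,dep}(f,x), where φ_{i,S}(f,x) = E[f(X) | X_{S∪{i}} = x_{S∪{i}}] − E[f(X) | X_S = x_S], φ_{i,S,int}(f,x) = E[f([x_S, x_i, X_{\bar S \setminus i}]) | X_S = x_S] − E[f([x_S, X_{\bar S}]) | X_S = x_S], and φ_{i,S,dep}(f,x) = E[f([x_S, x_i, X_{\bar S \setminus i}]) | X_{S∪{i}} = x_{S∪{i}}] − E[f([x_S, x_i, X_{\bar S \setminus i}]) | X_S = x_S]. -/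
/-- `upd x S z` is the vector `[x_S, z_{S̄}]`: coordinates in `S` fixed to the sample `x`,
the remaining ones given by `z`. -/
noncomputable def upd {M : ℕ} (x : Fin M → ℝ) (S : Finset (Fin M)) (z : Fin M → ℝ) :
    Fin M → ℝ := fun j => if j ∈ S then x j else z j

/-- `CE T g` stands for `E[g(X) | X_T = x_T]`; `hsubst` says that, conditionally on
`X_T = x_T`, one may substitute `x_T` for the known coordinates inside the integrand. -/
theorem shap_contribution_decomposition_general {M : ℕ} (i : Fin M) (S : Finset (Fin M))
    (f : (Fin M → ℝ) → ℝ) (x : Fin M → ℝ)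
    (CE : Finset (Fin M) → ((Fin M → ℝ) → ℝ) → ℝ)
    (hsubst : ∀ (T : Finset (Fin M)) (g : (Fin M → ℝ) → ℝ),
      CE T (fun z => g (upd x T z)) = CE T g) :
    CE (insert i S) f - CE S f
      = (CE S (fun z => f (upd x (insert i S) z)) - CE S (fun z => f (upd x S z)))
        + (CE (insert i S) (fun z => f (upd x (insert i S) z))
            - CE S (fun z => f (upd x (insert i S) z))) := by
  rw [hsubst (insert i S) f, hsubst S f]
  ring

/-- Decomposition of the conditional Shapley contribution:
`φ_{i,S}(f,x) = φ_{i,S,int}(f,x) + φ_{i,S,dep}(f,x)`.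
Here `CE S g` denotes the conditional expectation `E[g(X) | X_S = x_S]`, and `hsubst`
expresses that conditionally on `X_S = x_S` one may substitute `x_S` for the known
coordinates inside the integrand. -/
theorem shap_contribution_decomposition {M : ℕ} (i : Fin M) (S : Finset (Fin M))
    (hiS : i ∉ S) (f : (Fin M → ℝ) → ℝ) (x : Fin M → ℝ)
    (CE : Finset (Fin M) → ((Fin M → ℝ) → ℝ) → ℝ)
    (hsubst : ∀ (T : Finset (Fin M)) (g : (Fin M → ℝ) → ℝ),
      CE T (fun z => g (upd x T z)) = CE T g) :
    CE (insert i S) f - CE S f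
      = (CE S (fun z => f (upd x (insert i S) z)) - CE S (fun z => f (upd x S z)))
        + (CE (insert i S) (fun z => f (upd x (insert i S) z))
            - CE S (fun z => f (upd x (insert i S) z))) :=
  shap_contribution_decomposition_general i S f x CE hsubst
end

section
/- The interventional SHAP part satisfies the dummy property: if f([x_i, x_{\setminus i}]) = f([d, x_{\setminus i}]) for all x and all values d (i.e., f does not depend on coordinate i), then φ_{i,int}(f,x) = 0. -/
/-- The coalition `S^R` of features preceding feature `i` in the permutation `R`. -/
def SR {M : ℕ} (i : Fin M) (R : Equiv.Perm (Fin M)) : Finset (Fin M) :=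
  Finset.univ.filter fun j => R.symm j < R.symm i

theorem upd_insert {M : ℕ} (x : Fin M → ℝ) (S : Finset (Fin M)) (i : Fin M)
    (z : Fin M → ℝ) :
    upd x (insert i S) z = Function.update (upd x S z) i (x i) := by
  funext j
  by_cases h : j = i
  · subst h
    simp [upd]
  · simp [upd, h]

theorem comp_upd_insert_of_update_eq {M : ℕ} {i : Fin M} {f : (Fin M → ℝ) → ℝ}
    (hdummy : ∀ (z : Fin M → ℝ) (d : ℝ), f (Function.update z i d) = f z)
    (x : Fin M → ℝ) (S : Finset (Fin M)) :
    (fun z => f (upd x (insert i S) z)) = fun z => f (upd x S z) := by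
  funext z
  rw [upd_insert, hdummy]

/-- Dummy property of the interventional SHAP part: if the model `f` does not depend
on coordinate `i` (i.e. `f([x_i, x_{∖i}]) = f([d, x_{∖i}])` for all `x`, `d`),
then `φ_{i,int}(f,x) = 0`.  `CE S g` denotes `E[g(X) | X_S = x_S]`. -/
theorem interventional_part_dummy {M : ℕ} (i : Fin M) (f : (Fin M → ℝ) → ℝ)
    (x : Fin M → ℝ) (CE : Finset (Fin M) → ((Fin M → ℝ) → ℝ) → ℝ)
    (hdummy : ∀ (z : Fin M → ℝ) (d : ℝ), f (Function.update z i d) = f z) :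
    (1 / (M.factorial : ℝ)) * ∑ R : Equiv.Perm (Fin M),
        (CE (SR i R) (fun z => f (upd x (insert i (SR i R)) z))
          - CE (SR i R) (fun z => f (upd x (SR i R) z))) = 0 := by
  simp only [comp_upd_insert_of_update_eq hdummy, sub_self, Finset.sum_const_zero, mul_zero]
end

section
/- For a linear model f(X) = Σ_j a_j X_j, the dependent SHAP part of feature i at sample x equals φ_{i,dep} = (1/M!) Σ_R Σ_{j ∈ \bar{S^R}\setminus{i}} a_j (E[X_j | X_{S^R} = x_{S^R}, X_i = x_i] − E[X_j | X_{S^R} = x_{S^R}]). -/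
/-! Linearity of the model passes through a conditional expectation `E`, so in
`E[f([x_T, X_{T̄}])]` the coordinates in `T` contribute `a_j x_j` whatever `E` is, and the
coordinates outside `T` contribute `a_j E[X_j]`. Taking `T = S^R ∪ {i}` for both conditionings,
the fixed part cancels in the difference, leaving the claimed sum over `S̄^R ∖ {i}`. -/

section LinearFunctional

variable {α : Type*} {E : (α → ℝ) → ℝ}

theorem map_mul_of_mul_add
    (hlin : ∀ (c : ℝ) (g h : α → ℝ),
      E (fun z => c * g z + h z) = c * E g + E h)
    (hzero : E (fun _ => 0) = 0) (c : ℝ) (g : α → ℝ) :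
    E (fun z => c * g z) = c * E g := by
  simpa [hzero] using hlin c g fun _ => 0

theorem map_sum_of_mul_add
    (hlin : ∀ (c : ℝ) (g h : α → ℝ),
      E (fun z => c * g z + h z) = c * E g + E h)
    (hzero : E (fun _ => 0) = 0) {ι : Type*} (s : Finset ι) (f : ι → α → ℝ) :
    E (fun z => ∑ j ∈ s, f j z) = ∑ j ∈ s, E (f j) := by
  let L : (α → ℝ) →ₗ[ℝ] ℝ :=
    { toFun := E
      map_add' := fun g h => by
        change E (fun z => g z + h z) = _
        simpa only [one_mul] using hlin 1 g h
      map_smul' := fun c g => map_mul_of_mul_add hlin hzero c g }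
  rw [← Finset.sum_fn]
  exact map_sum L f s

end LinearFunctional

theorem map_linear_upd {M : ℕ} {E : ((Fin M → ℝ) → ℝ) → ℝ}
    (hlin : ∀ (c : ℝ) (g h : (Fin M → ℝ) → ℝ),
      E (fun z => c * g z + h z) = c * E g + E h)
    (hconst : ∀ c : ℝ, E (fun _ => c) = c) (a x : Fin M → ℝ) (T : Finset (Fin M)) :
    E (fun z => ∑ j, a j * upd x T z j)
      = ∑ j ∈ T, a j * x j + ∑ j ∈ Tᶜ, a j * E (fun z => z j) := by
  rw [map_sum_of_mul_add hlin (hconst 0), ← Finset.sum_add_sum_compl T]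
  congr 1
  · refine Finset.sum_congr rfl fun j hj => ?_
    simpa [upd, hj] using hconst (a j * x j)
  · refine Finset.sum_congr rfl fun j hj => ?_
    simpa [upd, Finset.mem_compl.mp hj] using
      map_mul_of_mul_add hlin (hconst 0) (a j) fun z => z j

/-- `CE S g` models `E[g(X) | X_S = x_S]`. -/
theorem linear_dependent_part {M : ℕ} (i : Fin M) (a : Fin M → ℝ) (x : Fin M → ℝ)
    (CE : Finset (Fin M) → ((Fin M → ℝ) → ℝ) → ℝ)
    (hlin : ∀ (S : Finset (Fin M)) (c : ℝ) (g h : (Fin M → ℝ) → ℝ),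
      CE S (fun z => c * g z + h z) = c * CE S g + CE S h)
    (hconst : ∀ (S : Finset (Fin M)) (c : ℝ), CE S (fun _ => c) = c) :
    (1 / (M.factorial : ℝ)) * ∑ R : Equiv.Perm (Fin M),
        (CE (insert i (SR i R)) (fun z => ∑ j, a j * upd x (insert i (SR i R)) z j)
          - CE (SR i R) (fun z => ∑ j, a j * upd x (insert i (SR i R)) z j))
      = (1 / (M.factorial : ℝ)) * ∑ R : Equiv.Perm (Fin M),
          ∑ j ∈ (insert i (SR i R))ᶜ,
            a j * (CE (insert i (SR i R)) (fun z => z j)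
                    - CE (SR i R) (fun z => z j)) := by
  congr 1
  refine Finset.sum_congr rfl fun R _ => ?_
  rw [map_linear_upd (hlin _) (hconst _), map_linear_upd (hlin _) (hconst _),
    add_sub_add_left_eq_sub, ← Finset.sum_sub_distrib]
  simp only [mul_sub]
end

section
/- If f decomposes additively as f(X) = Σ_{A ⊆ F} f_A(X_A), then the interventional SHAP part of feature i depends only on the components containing i: φ_{i,int}(f, x) = φ_{i,int}(Σ_{A : i ∈ A} f_A, x). In particular all additive components f_A with i ∉ A contribute zero to φ_{i,int}. -/
/-- The (permutation-averaged) interventional SHAP part of feature `i` at sample `x`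
of the model `f`, where `CE S g = E[g(X) | X_S = x_S]`. -/
noncomputable def phiInt {M : ℕ} (CE : Finset (Fin M) → ((Fin M → ℝ) → ℝ) → ℝ)
    (i : Fin M) (f : (Fin M → ℝ) → ℝ) (x : Fin M → ℝ) : ℝ :=
  (1 / (M.factorial : ℝ)) * ∑ R : Equiv.Perm (Fin M),
    (CE (SR i R) (fun z => f (upd x (insert i (SR i R)) z))
      - CE (SR i R) (fun z => f (upd x (SR i R) z)))

/-! Since `CE` is additive, so is `f ↦ φ_{i,int}(f, x)`; and a model that ignores
feature `i` sees the same input whether or not `i` is added to the coalition, so its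
`φ_{i,int}` vanishes. Splitting `Σ_A f_A` by whether `i ∈ A` gives the theorem. -/

lemma upd_insert_apply_of_ne {M : ℕ} (x : Fin M → ℝ) (S : Finset (Fin M)) (z : Fin M → ℝ)
    {i j : Fin M} (hji : j ≠ i) : upd x (insert i S) z j = upd x S z j := by
  simp [upd, hji]

lemma phiInt_eq_zero_of_independent {M : ℕ} (CE : Finset (Fin M) → ((Fin M → ℝ) → ℝ) → ℝ)
    (i : Fin M) (f : (Fin M → ℝ) → ℝ) (x : Fin M → ℝ)
    (hf : ∀ z w : Fin M → ℝ, (∀ j ≠ i, z j = w j) → f z = f w) :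
    phiInt CE i f x = 0 := by
  have hupd : ∀ S z, f (upd x (insert i S) z) = f (upd x S z) := fun S z =>
    hf _ _ fun j hj => upd_insert_apply_of_ne x S z hj
  simp only [phiInt, hupd, sub_self, Finset.sum_const_zero, mul_zero]

lemma phiInt_add {M : ℕ} (CE : Finset (Fin M) → ((Fin M → ℝ) → ℝ) → ℝ)
    (hadd : ∀ (S : Finset (Fin M)) (g h : (Fin M → ℝ) → ℝ),
      CE S (fun z => g z + h z) = CE S g + CE S h)
    (i : Fin M) (f g : (Fin M → ℝ) → ℝ) (x : Fin M → ℝ) :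
    phiInt CE i (fun z => f z + g z) x = phiInt CE i f x + phiInt CE i g x := by
  simp only [phiInt, hadd, ← mul_add, ← Finset.sum_add_distrib]
  congr 1
  refine Finset.sum_congr rfl fun R _ => ?_
  ring

theorem additive_components_interventional_general {M : ℕ} (i : Fin M) (x : Fin M → ℝ)
    (fA : Finset (Fin M) → ((Fin M → ℝ) → ℝ))
    (hdep : ∀ (A : Finset (Fin M)) (z w : Fin M → ℝ),
      (∀ j ∈ A, z j = w j) → fA A z = fA A w)
    (CE : Finset (Fin M) → ((Fin M → ℝ) → ℝ) → ℝ)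
    (hadd : ∀ (S : Finset (Fin M)) (g h : (Fin M → ℝ) → ℝ),
      CE S (fun z => g z + h z) = CE S g + CE S h) :
    phiInt CE i (fun z => ∑ A ∈ Finset.univ.powerset, fA A z) x
      = phiInt CE i
          (fun z => ∑ A ∈ Finset.univ.powerset.filter (fun A => i ∈ A), fA A z) x := by
  have hrest : phiInt CE i
      (fun z => ∑ A ∈ Finset.univ.powerset.filter (fun A => i ∉ A), fA A z) x = 0 := by
    refine phiInt_eq_zero_of_independent CE i _ x fun z w hzw => ?_
    refine Finset.sum_congr rfl fun A hA => hdep A z w fun j hj => hzw j ?_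
    rintro rfl
    exact (Finset.mem_filter.mp hA).2 hj
  simp only [← Finset.sum_filter_add_sum_filter_not Finset.univ.powerset (fun A => i ∈ A)]
  rw [phiInt_add CE hadd, hrest, add_zero]

/-- If `f` decomposes additively as `f(X) = Σ_{A ⊆ F} f_A(X_A)` with each component
`f_A` depending only on the coordinates in `A`, then the interventional SHAP part of
feature `i` depends only on the components containing `i`:
`φ_{i,int}(f, x) = φ_{i,int}(Σ_{A : i ∈ A} f_A, x)`. -/
theorem additive_components_interventional {M : ℕ} (i : Fin M) (x : Fin M → ℝ)
    (fA : Finset (Fin M) → ((Fin M → ℝ) → ℝ))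
    (hdep : ∀ (A : Finset (Fin M)) (z w : Fin M → ℝ),
      (∀ j ∈ A, z j = w j) → fA A z = fA A w)
    (CE : Finset (Fin M) → ((Fin M → ℝ) → ℝ) → ℝ)
    (hadd : ∀ (S : Finset (Fin M)) (g h : (Fin M → ℝ) → ℝ),
      CE S (fun z => g z + h z) = CE S g + CE S h)
    (hzero : ∀ S : Finset (Fin M), CE S (fun _ => (0 : ℝ)) = 0) :
    phiInt CE i (fun z => ∑ A ∈ Finset.univ.powerset, fA A z) x
      = phiInt CE i
          (fun z => ∑ A ∈ Finset.univ.powerset.filter (fun A => i ∈ A), fA A z) x :=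
  additive_components_interventional_general i x fA hdep CE hadd
end

section
/- Let X_1, X_2 be Bernoulli(1/2) with P(X_1 = X_2) = p, and f(X_1,X_2) = X_1. For the sample (1,1), the conditional SHAP value of feature 2 equals φ_2 = (2p−1)/4, and the dependent SHAP part of feature 2 equals its entire SHAP value: φ_{2,dep} = φ_2. -/
/-! Both marginals of the symmetric law are uniform, so `E f = 1/2`, `E[f | X_2 = 1] = p` and
`E[f | X_1 = 1] = 1`, which gives `φ_2 = (2p - 1)/4`. The interventional part only ever compares
`f x₁ x₂` with `f x₁ 1`, and these agree because `f` ignores its second argument. -/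

open Finset

noncomputable def symmBernoulliPmf (p : ℝ) (a b : Bool) : ℝ := if a = b then p / 2 else (1 - p) / 2

lemma eq_symmBernoulliPmf {p : ℝ} {q : Bool → Bool → ℝ}
    (h11 : q true true = p / 2) (h00 : q false false = p / 2)
    (h10 : q true false = (1 - p) / 2) (h01 : q false true = (1 - p) / 2) :
    q = symmBernoulliPmf p := by
  funext a b
  cases a <;> cases b <;> simp [symmBernoulliPmf, *]

lemma sum_symmBernoulliPmf_left (p : ℝ) (b : Bool) : ∑ a, symmBernoulliPmf p a b = 1 / 2 := by
  cases b <;> simp [symmBernoulliPmf] <;> ring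

lemma sum_symmBernoulliPmf_right (p : ℝ) (a : Bool) : ∑ b, symmBernoulliPmf p a b = 1 / 2 := by
  cases a <;> simp [symmBernoulliPmf] <;> ring

lemma interventional_shap_snd_eq_zero_of_dummy (q f : Bool → Bool → ℝ) (g : Bool → ℝ)
    (hf : ∀ x1 x2, f x1 x2 = g x1) :
    (1 / 2) * (((∑ x1 : Bool, ∑ x2 : Bool, q x1 x2 * f x1 true)
        - ∑ x1 : Bool, ∑ x2 : Bool, q x1 x2 * f x1 x2)
      + ((∑ x2 : Bool, q true x2 * f true true) / (∑ x2 : Bool, q true x2)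
        - (∑ x2 : Bool, q true x2 * f true x2) / (∑ x2 : Bool, q true x2))) = 0 := by
  simp only [hf, sub_self, add_zero, mul_zero]

theorem toy_bernoulli_dependent_part_general (p : ℝ)
    (q : Bool → Bool → ℝ)
    (h11 : q true true = p / 2) (h00 : q false false = p / 2)
    (h10 : q true false = (1 - p) / 2) (h01 : q false true = (1 - p) / 2)
    (f : Bool → Bool → ℝ) (hf : ∀ x1 x2, f x1 x2 = if x1 then 1 else 0)
    (Ef : ℝ) (hEf : Ef = ∑ x1 : Bool, ∑ x2 : Bool, q x1 x2 * f x1 x2)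
    (Ef2 : ℝ) (hEf2 : Ef2 = (∑ x1 : Bool, q x1 true * f x1 true) / (∑ x1 : Bool, q x1 true))
    (Ef1 : ℝ) (hEf1 : Ef1 = (∑ x2 : Bool, q true x2 * f true x2) / (∑ x2 : Bool, q true x2))
    (phi2 : ℝ) (hphi2 : phi2 = (1 / 2) * ((Ef2 - Ef) + (f true true - Ef1)))
    (phi2int : ℝ)
    (hphi2int : phi2int =
      (1 / 2) * (((∑ x1 : Bool, ∑ x2 : Bool, q x1 x2 * f x1 true) - Ef)
        + (((∑ x2 : Bool, q true x2 * f true true) / (∑ x2 : Bool, q true x2)) - Ef1)))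
    (phi2dep : ℝ) (hphi2dep : phi2dep = phi2 - phi2int) :
    phi2 = (2 * p - 1) / 4 ∧ phi2dep = phi2 := by
  have hint : phi2int = 0 := by
    rw [hphi2int, hEf, hEf1]
    exact interventional_shap_snd_eq_zero_of_dummy q f _ hf
  obtain rfl := eq_symmBernoulliPmf h11 h00 h10 h01
  have hf11 : f true true = 1 := by simp [hf]
  have hEf' : Ef = 1 / 2 := by
    rw [hEf, Fintype.sum_bool]
    simp only [hf, if_true, Bool.false_eq_true, if_false, mul_one, mul_zero, sum_const_zero,
      add_zero]
    exact sum_symmBernoulliPmf_right p true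
  have hEf2' : Ef2 = p := by
    rw [hEf2, sum_symmBernoulliPmf_left]
    simp [hf, symmBernoulliPmf]
  have hEf1' : Ef1 = 1 := by
    simp only [hEf1, hf, if_true, mul_one, sum_symmBernoulliPmf_right]
    norm_num
  refine ⟨?_, by rw [hphi2dep, hint, sub_zero]⟩
  rw [hphi2, hEf', hEf2', hEf1', hf11]
  ring

/-- `X_1, X_2` Bernoulli(1/2) with `P(X_1 = X_2) = p` (joint pmf `q(1,1) = q(0,0) = p/2`,
`q(1,0) = q(0,1) = (1−p)/2`) and `f(X_1,X_2) = X_1`.  For the sample `(1,1)`, the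
conditional SHAP value of feature 2 is `φ_2 = (2p−1)/4`, and the dependent SHAP part of
feature 2 equals its entire SHAP value: `φ_{2,dep} = φ_2` (the interventional part
vanishing by the dummy property). -/
theorem toy_bernoulli_dependent_part (p : ℝ) (hp0 : 0 < p) (hp1 : p < 1)
    (q : Bool → Bool → ℝ)
    (h11 : q true true = p / 2) (h00 : q false false = p / 2)
    (h10 : q true false = (1 - p) / 2) (h01 : q false true = (1 - p) / 2)
    (f : Bool → Bool → ℝ) (hf : ∀ x1 x2, f x1 x2 = if x1 then 1 else 0)
    (Ef : ℝ) (hEf : Ef = ∑ x1 : Bool, ∑ x2 : Bool, q x1 x2 * f x1 x2)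
    (Ef2 : ℝ) (hEf2 : Ef2 = (∑ x1 : Bool, q x1 true * f x1 true) / (∑ x1 : Bool, q x1 true))
    (Ef1 : ℝ) (hEf1 : Ef1 = (∑ x2 : Bool, q true x2 * f true x2) / (∑ x2 : Bool, q true x2))
    (phi2 : ℝ) (hphi2 : phi2 = (1 / 2) * ((Ef2 - Ef) + (f true true - Ef1)))
    (phi2int : ℝ)
    (hphi2int : phi2int =
      (1 / 2) * (((∑ x1 : Bool, ∑ x2 : Bool, q x1 x2 * f x1 true) - Ef)
        + (((∑ x2 : Bool, q true x2 * f true true) / (∑ x2 : Bool, q true x2)) - Ef1)))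
    (phi2dep : ℝ) (hphi2dep : phi2dep = phi2 - phi2int) :
    phi2 = (2 * p - 1) / 4 ∧ phi2dep = phi2 :=
  toy_bernoulli_dependent_part_general p q h11 h00 h10 h01 f hf Ef hEf Ef2 hEf2 Ef1 hEf1 phi2 hphi2
    phi2int hphi2int phi2dep hphi2dep
end
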